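/- Let W ⊂ ℝ^d be a bounded open set and let r > 0. Then there exists a constant C₂ > 0, depending only on r, d, p and c, such that for every open set V ⊆ W, every ξ ∈ ℝ^d and every ε > 0 satisfying εr < dist(V + (0,ε)ξ, ℝ^d ∖ W), one has ∫_V a_ε((v(x+εξ)−v(x))/ε) dx ≤ C₂ (|ξ|^p + 1) A_ε^r(v, V_{ε,ξ}) for every v ∈ L^p(W;ℝ^m), where (0,ε)ξ := {sξ : s ∈ (0,ε)}, V + (0,ε)ξ := {x + sξ : x ∈ V, s ∈ (0,ε)}, and V_{ε,ξ} := V + (0,ε)ξ + B_{εr}. -/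

import Mathlib

open MeasureTheory Filter Metric Set
open scoped ENNReal Topology Pointwise

noncomputable section

/-- `ℝ^n` with the Euclidean norm. -/
abbrev Eu (n : ℕ) : Type := EuclideanSpace ℝ (Fin n)

/-- `g_ε(z) := min{|z|², 1/ε}`. -/
def gE {m : ℕ} (ε : ℝ) (z : Eu m) : ℝ := min (‖z‖ ^ 2) (1 / ε)

/-- `E_ε(ξ) := {x ∈ E : x + εξ ∈ E}`. -/
def shiftSet {d : ℕ} (E : Set (Eu d)) (ε : ℝ) (ξ : Eu d) : Set (Eu d) :=
  {x ∈ E | x + ε • ξ ∈ E}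
/-- `A_ε^r(u,U) := ∫_{B_r} ∫_{U_ε(ξ)} a_ε((u(x+εξ)-u(x))/ε) dx dξ`. -/
def Afun {d m : ℕ} (a : ℝ → Eu m → ℝ) (ε r : ℝ) (u : Eu d → Eu m) (U : Set (Eu d)) : ℝ≥0∞ :=
  ∫⁻ ξ in Metric.ball (0 : Eu d) r, ∫⁻ x in shiftSet U ε ξ,
    ENNReal.ofReal (a ε (ε⁻¹ • (u (x + ε • ξ) - u x)))

/-- A function on `ℝ^m` that is monotone w.r.t. the norm is measurable. -/
lemma measurable_of_norm_mono {m : ℕ} [NeZero m] (f : Eu m → ℝ)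
    (hf : ∀ z₁ z₂ : Eu m, ‖z₁‖ ≤ ‖z₂‖ → f z₁ ≤ f z₂) : Measurable f := by
  classical
  set e : Eu m := EuclideanSpace.single (0 : Fin m) (1 : ℝ) with he
  have hne : ∀ t : ℝ, ‖(max t 0) • e‖ = max t 0 := by
    intro t
    rw [norm_smul, he, EuclideanSpace.norm_single, Real.norm_eq_abs, Real.norm_eq_abs,
      abs_of_nonneg (le_max_right t 0), abs_one, mul_one]
  have hφ : Monotone (fun t : ℝ => f ((max t 0) • e)) := by
    intro t₁ t₂ h
    exact hf _ _ (by rw [hne, hne]; exact max_le_max h le_rfl)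
  have hfe : ∀ z : Eu m, f z = (fun t : ℝ => f ((max t 0) • e)) ‖z‖ := by
    intro z
    have h1 : ‖(max ‖z‖ 0) • e‖ = ‖z‖ := by rw [hne, max_eq_left (norm_nonneg z)]
    exact le_antisymm (hf _ _ h1.symm.le) (hf _ _ h1.le)
  have hcomp : f = (fun t : ℝ => f ((max t 0) • e)) ∘ (fun z => ‖z‖) := funext hfe
  rw [hcomp]
  exact hφ.measurable.comp measurable_norm

/-- Translation-invariance of the set Lebesgue integral. -/
lemma setLIntegral_translate {d : ℕ} [NeZero d] (f : Eu d → ℝ≥0∞) (c : Eu d) (S : Set (Eu d)) :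
    ∫⁻ x in S, f (x + c) = ∫⁻ y in (fun x => x + c) '' S, f y :=
  MeasurePreserving.setLIntegral_comp_emb (measurePreserving_add_right volume c)
    (MeasurableEquiv.addRight c).measurableEmbedding f S

/-- Reflection-translation invariance of the set Lebesgue integral. -/
lemma setLIntegral_subLeft {d : ℕ} [NeZero d] (f : Eu d → ℝ≥0∞) (c : Eu d) (S : Set (Eu d)) :
    ∫⁻ x in S, f (c - x) = ∫⁻ y in (fun x => c - x) '' S, f y :=
  MeasurePreserving.setLIntegral_comp_emb (Measure.measurePreserving_sub_left volume c)
    (Homeomorph.subLeft c).measurableEmbedding f S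


set_option maxHeartbeats 2000000 in
/-- Finite-range interaction estimate: for every `r > 0` there is `C₂ > 0` (depending only on
`r`, `d`, `p`, `c`) such that for every bounded open `W`, every open `V ⊆ W`, every `ξ ∈ ℝ^d`
and every `ε > 0` with `εr < dist(V + (0,ε)ξ, ℝ^d ∖ W)`, one has
`∫_V a_ε((v(x+εξ)-v(x))/ε) dx ≤ C₂ (|ξ|^p + 1) A_ε^r(v, V_{ε,ξ})` for `v ∈ L^p(W;ℝ^m)`,
where `V_{ε,ξ} := V + (0,ε)ξ + B_{εr}`. -/
theorem statement5 {d m : ℕ} [NeZero d] [NeZero m]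
    (p : ℝ) (hp : 1 ≤ p) (c : ℝ) (hc : 0 < c)
    (a : ℝ → Eu m → ℝ)
    (ha_nn : ∀ ε > (0 : ℝ), ∀ z : Eu m, 0 ≤ a ε z)
    (ha_mono : ∀ ε > (0 : ℝ), ∀ z₁ z₂ : Eu m, ‖z₁‖ ≤ ‖z₂‖ → a ε z₁ ≤ a ε z₂)
    (ha_growth : ∀ ε > (0 : ℝ), ∀ z : Eu m, a ε z ≤ c * ‖z‖ ^ p)
    (ha_subadd : ∀ ε > (0 : ℝ), ∀ k : ℕ, 1 ≤ k → ∀ z : Fin k → Eu m,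
      a ε (∑ i, z i) ≤ (k : ℝ) ^ (p - 1) * ∑ i, a ε (z i))
    (r : ℝ) (hr : 0 < r) :
    ∃ C₂ : ℝ, 0 < C₂ ∧
      ∀ W : Set (Eu d), IsOpen W → Bornology.IsBounded W →
        ∀ V : Set (Eu d), IsOpen V → V ⊆ W → ∀ ξ : Eu d, ∀ ε : ℝ, 0 < ε →
          ENNReal.ofReal (ε * r) <
            ⨅ x ∈ V + (fun s : ℝ => s • ξ) '' Set.Ioo (0 : ℝ) ε, EMetric.infEdist x Wᶜ →
          ∀ v : Eu d → Eu m, MemLp v (ENNReal.ofReal p) (volume.restrict W) →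
            ∫⁻ x in V, ENNReal.ofReal (a ε (ε⁻¹ • (v (x + ε • ξ) - v x))) ≤
              ENNReal.ofReal (C₂ * (‖ξ‖ ^ p + 1)) *
                Afun a ε r v
                  (V + (fun s : ℝ => s • ξ) '' Set.Ioo (0 : ℝ) ε +
                    Metric.ball (0 : Eu d) (ε * r)) := by
  have hp0 : (0:ℝ) ≤ p := le_trans zero_le_one hp
  set βE : ℝ≥0∞ := volume (Metric.ball (0 : Eu d) (r/2)) with hβE
  have hβ0 : βE ≠ 0 := (measure_ball_pos volume 0 (by positivity)).ne'
  have hβtop : βE ≠ ⊤ := measure_ball_lt_top.ne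
  set βr : ℝ := βE.toReal with hβr
  have hβrpos : 0 < βr := ENNReal.toReal_pos hβ0 hβtop
  refine ⟨(2*(2/r+1))^p * 2^p / βr, by positivity, ?_⟩
  intro W hWopen hWb V hVopen hVW ξ ε hε hdist v hv
  set U : Set (Eu d) := V + (fun s : ℝ => s • ξ) '' Set.Ioo (0 : ℝ) ε +
      Metric.ball (0 : Eu d) (ε * r) with hUdef
  have ha_meas : Measurable (a ε) := measurable_of_norm_mono (a ε) (ha_mono ε hε)
  have hUopen : IsOpen U := IsOpen.add_left isOpen_ball
  -- U ⊆ W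
  have hUW : U ⊆ W := by
    intro u hu
    rw [hUdef, Set.mem_add] at hu
    obtain ⟨q, hq, b, hb, rfl⟩ := hu
    by_contra hu'
    have h1 : ⨅ x ∈ V + (fun s : ℝ => s • ξ) '' Set.Ioo (0 : ℝ) ε, EMetric.infEdist x Wᶜ ≤
        EMetric.infEdist q Wᶜ := iInf₂_le q hq
    have h2 : EMetric.infEdist q Wᶜ ≤ edist q (q + b) := EMetric.infEdist_le_edist_of_mem hu'
    have h3 : edist q (q + b) = ENNReal.ofReal ‖b‖ := by rw [edist_dist, dist_self_add_right]
    have h4 : ENNReal.ofReal ‖b‖ < ENNReal.ofReal (ε * r) :=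
      (ENNReal.ofReal_lt_ofReal_iff (by positivity)).2 (mem_ball_zero_iff.1 hb)
    exact absurd hdist (not_lt.2 (le_of_lt (lt_of_le_of_lt (h1.trans (h2.trans h3.le)) h4)))
  -- basic membership lemma for U
  have hmemU : ∀ t : ℝ, 0 ≤ t → t ≤ ε → ∀ w : Eu d, ‖w‖ < ε*r/2 → ∀ x ∈ V,
      x + t • ξ + w ∈ U := by
    intro t ht0 htε w hw x hx
    have hξ0 : (0:ℝ) ≤ ‖ξ‖ := norm_nonneg ξ
    set l : ℝ := min 1 (r/(‖ξ‖+1)) with hl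
    have hl0 : 0 < l := lt_min one_pos (by positivity)
    have hl1 : l ≤ 1 := min_le_left _ _
    set s : ℝ := t + l*(ε/2 - t) with hs
    have hseq : s = (1-l)*t + l*(ε/2) := by rw [hs]; ring
    have hs0 : 0 < s := by
      rw [hseq]
      nlinarith [mul_pos hl0 (by linarith : (0:ℝ) < ε/2),
        mul_nonneg (by linarith : (0:ℝ) ≤ 1 - l) ht0]
    have hsε : s < ε := by
      rw [hseq]
      nlinarith [mul_pos hl0 (by linarith : (0:ℝ) < ε/2),
        mul_le_mul_of_nonneg_left htε (by linarith : (0:ℝ) ≤ 1 - l)]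
    have hbound : ‖(t - s) • ξ + w‖ < ε*r := by
      have h1 : ‖(t-s) • ξ‖ = |t - s| * ‖ξ‖ := by rw [norm_smul, Real.norm_eq_abs]
      have h2 : |t - s| ≤ l * (ε/2) := by
        have he : t - s = -(l*(ε/2 - t)) := by rw [hs]; ring
        rw [he, abs_neg, abs_mul, abs_of_pos hl0]
        have h2' : |ε/2 - t| ≤ ε/2 := abs_le.2 ⟨by linarith, by linarith⟩
        nlinarith
      have h3 : l * ‖ξ‖ ≤ r := by
        have h3a : l ≤ r/(‖ξ‖+1) := min_le_right _ _
        have h3b : (r/(‖ξ‖+1)) * ‖ξ‖ ≤ r := by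
          rw [div_mul_eq_mul_div, div_le_iff₀ (by positivity)]
          nlinarith
        calc l * ‖ξ‖ ≤ (r/(‖ξ‖+1)) * ‖ξ‖ := mul_le_mul_of_nonneg_right h3a hξ0
          _ ≤ r := h3b
      have h4 : |t - s| * ‖ξ‖ ≤ (ε/2)*r := by
        calc |t - s| * ‖ξ‖ ≤ (l*(ε/2)) * ‖ξ‖ := mul_le_mul_of_nonneg_right h2 hξ0
          _ = (ε/2)*(l*‖ξ‖) := by ring
          _ ≤ (ε/2)*r := mul_le_mul_of_nonneg_left h3 (by positivity)
      calc ‖(t-s) • ξ + w‖ ≤ |t - s| * ‖ξ‖ + ‖w‖ := by rw [← h1]; exact norm_add_le _ _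
        _ < ε*r := by nlinarith
    have heq : x + t • ξ + w = (x + s • ξ) + ((t - s) • ξ + w) := by module
    rw [heq, hUdef]
    exact Set.add_mem_add (Set.add_mem_add hx ⟨s, ⟨hs0, hsε⟩, rfl⟩) (mem_ball_zero_iff.2 hbound)
  -- measurable representative of v on W
  obtain ⟨g, hg, hvg⟩ : ∃ g : Eu d → Eu m, StronglyMeasurable g ∧ v =ᵐ[volume.restrict W] g :=
    ⟨hv.1.mk v, hv.1.stronglyMeasurable_mk, hv.1.ae_eq_mk⟩
  set N : Set (Eu d) := {x | ¬ v x = g x} ∩ W with hNdef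
  have hN : volume N = 0 := by
    have h := ae_iff.1 hvg
    rwa [Measure.restrict_apply' hWopen.measurableSet] at h
  -- replace v by g in set integrals
  have hrep : ∀ S : Set (Eu d), MeasurableSet S → ∀ w : Eu d,
      (∀ x ∈ S, x ∈ W) → (∀ x ∈ S, x + w ∈ W) →
      ∫⁻ x in S, ENNReal.ofReal (a ε (ε⁻¹ • (v (x + w) - v x))) =
      ∫⁻ x in S, ENNReal.ofReal (a ε (ε⁻¹ • (g (x + w) - g x))) := by
    intro S hS w hSW hSW'
    apply lintegral_congr_ae
    have h1 : ∀ᵐ x : Eu d ∂volume, x ∉ N := measure_eq_zero_iff_ae_notMem.1 hN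
    have h2 : ∀ᵐ x : Eu d ∂volume, x + w ∉ N := by
      have hpre : volume ((fun x : Eu d => x + w) ⁻¹' N) = 0 := by
        rw [measure_preimage_add_right]; exact hN
      exact measure_eq_zero_iff_ae_notMem.1 hpre
    filter_upwards [ae_restrict_of_ae (h1.and h2), ae_restrict_mem hS] with x hx hxS
    obtain ⟨hx1, hx2⟩ := hx
    have e1 : v x = g x := by
      by_contra h; exact hx1 ⟨h, hSW x hxS⟩
    have e2 : v (x + w) = g (x + w) := by
      by_contra h; exact hx2 ⟨h, hSW' x hxS⟩
    rw [e1, e2]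
  -- the number of steps
  set k : ℕ := ⌊2*‖ξ‖/r⌋₊ + 1 with hkdef
  have hk1 : 1 ≤ k := Nat.le_add_left 1 _
  have hkR : (0:ℝ) < (k:ℝ) := by exact_mod_cast Nat.succ_pos _
  have hkgt : 2*‖ξ‖/r < (k:ℝ) := by
    have := Nat.lt_succ_floor (2*‖ξ‖/r)
    exact_mod_cast this
  set cv : Eu d := ((k:ℝ)⁻¹) • ξ with hcv
  have hcnorm : ‖cv‖ ≤ r/2 := by
    rw [hcv, norm_smul, Real.norm_eq_abs, abs_of_pos (inv_pos.2 hkR)]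
    rw [div_lt_iff₀ hr] at hkgt
    have h2 : ‖ξ‖ ≤ r/2*(k:ℝ) := by nlinarith
    have h3 := mul_le_mul_of_nonneg_left h2 (le_of_lt (inv_pos.2 hkR))
    calc (k:ℝ)⁻¹ * ‖ξ‖ ≤ (k:ℝ)⁻¹ * (r/2*(k:ℝ)) := h3
      _ = r/2 := by field_simp
  -- the intermediate translation points and sets
  set q : ℕ → Eu d → Eu d := fun j x => x + ((j:ℝ)*(ε/(k:ℝ))) • ξ with hq
  have hqstep : ∀ (j:ℕ) (x : Eu d), q j x + ε • cv = q (j+1) x := by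
    intro j x
    simp only [hq, hcv]
    push_cast
    module
  have hq0 : ∀ x, q 0 x = x := by intro x; simp [hq]
  have hqk : ∀ x, q k x = x + ε • ξ := by
    intro x
    have hkk : (k:ℝ)*(ε/(k:ℝ)) = ε := by field_simp
    simp only [hq, hkk]
  set T : ℕ → Set (Eu d) := fun j => (q j) '' V with hT
  set Fg : Eu d → ℝ≥0∞ := fun y => ENNReal.ofReal (a ε (ε⁻¹ • (g (y + ε • cv) - g y))) with hFg
  set Φ : Eu d → ℝ≥0∞ := fun η => ∫⁻ x in shiftSet U ε η,
      ENNReal.ofReal (a ε (ε⁻¹ • (g (x + ε • η) - g x))) with hΦ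
  set Ag : ℝ≥0∞ := ∫⁻ η in Metric.ball (0:Eu d) r, Φ η with hAgdef
  -- measurability of shifted integrands
  have hFme : ∀ w : Eu d, Measurable
      (fun x : Eu d => ENNReal.ofReal (a ε (ε⁻¹ • (g (x + w) - g x)))) := by
    intro w
    exact (ha_meas.comp (((hg.measurable.comp (measurable_add_const w)).sub
      hg.measurable).const_smul ε⁻¹)).ennreal_ofReal
  -- inclusion of translated sets in U resp. shiftSet
  have hTsub : ∀ j : ℕ, j ≤ k → ∀ η : Eu d, ‖η‖ < r/2 → ∀ y ∈ T j,
      y ∈ U ∧ y + ε • η ∈ U := by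
    intro j hj η hη y hy
    rw [hT] at hy
    obtain ⟨x, hx, rfl⟩ := hy
    have htj0 : 0 ≤ (j:ℝ)*(ε/(k:ℝ)) := by positivity
    have htjε : (j:ℝ)*(ε/(k:ℝ)) ≤ ε := by
      have hjk : (j:ℝ) ≤ (k:ℝ) := by exact_mod_cast hj
      have hek : 0 ≤ ε/(k:ℝ) := by positivity
      calc (j:ℝ)*(ε/(k:ℝ)) ≤ (k:ℝ)*(ε/(k:ℝ)) := mul_le_mul_of_nonneg_right hjk hek
        _ = ε := by field_simp
    constructor
    · have h := hmemU _ htj0 htjε 0 (by rw [norm_zero]; positivity) x hx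
      simpa [hq] using h
    · have h := hmemU _ htj0 htjε (ε • η)
        (by rw [norm_smul, Real.norm_eq_abs, abs_of_pos hε]; nlinarith) x hx
      simpa [hq] using h
  have hTsub2 : ∀ j : ℕ, j + 1 ≤ k → ∀ η : Eu d, ‖η‖ < r/2 →
      (fun y => y + ε • η) '' T j ⊆ shiftSet U ε (cv - η) := by
    intro j hj η hη x hxmem
    obtain ⟨y, hy, rfl⟩ := hxmem
    have hy' := hy
    rw [hT] at hy'
    obtain ⟨x₀, hx₀, rfl⟩ := hy'
    refine ⟨(hTsub j (Nat.le_of_succ_le hj) η hη _ hy).2, ?_⟩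
    have heq : q j x₀ + ε • η + ε • (cv - η) = q (j+1) x₀ := by
      rw [← hqstep j x₀]; module
    rw [heq]
    have h := hTsub (j+1) hj η hη (q (j+1) x₀) ⟨x₀, hx₀, rfl⟩
    exact h.1
  have hball2 : (fun η : Eu d => cv - η) '' Metric.ball 0 (r/2) ⊆ Metric.ball (0:Eu d) r := by
    rintro _ ⟨η, hη, rfl⟩
    rw [mem_ball_zero_iff] at hη ⊢
    calc ‖cv - η‖ ≤ ‖cv‖ + ‖η‖ := norm_sub_le _ _
      _ < r := by linarith [hcnorm]
  -- the fundamental single-step estimate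
  have hstep : ∀ j : ℕ, j + 1 ≤ k → ∫⁻ y in T j, Fg y ≤ ENNReal.ofReal (2^p) * Ag / βE := by
    intro j hj
    rw [ENNReal.le_div_iff_mul_le (Or.inl hβ0) (Or.inl hβtop), mul_comm]
    have hgm := hg.measurable
    have h1 : βE * ∫⁻ y in T j, Fg y =
        ∫⁻ y in T j, ∫⁻ _η in Metric.ball (0:Eu d) (r/2), Fg y := by
      rw [← lintegral_const_mul' βE Fg hβtop]
      refine lintegral_congr fun y => ?_
      rw [setLIntegral_const, mul_comm, hβE]
    have hptw : ∀ η : Eu d, ∀ y : Eu d, Fg y ≤ ENNReal.ofReal ((2:ℝ)^(p-1)) *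
        (ENNReal.ofReal (a ε (ε⁻¹ • (g (y + ε • η) - g y))) +
         ENNReal.ofReal (a ε (ε⁻¹ • (g (y + ε • cv) - g (y + ε • η))))) := by
      intro η y
      have hz := ha_subadd ε hε 2 one_le_two
        ![ε⁻¹ • (g (y + ε • η) - g y), ε⁻¹ • (g (y + ε • cv) - g (y + ε • η))]
      simp only [Fin.sum_univ_two, Matrix.cons_val_zero, Matrix.cons_val_one,
        Matrix.head_cons] at hz
      have hsum : ε⁻¹ • (g (y + ε • η) - g y) + ε⁻¹ • (g (y + ε • cv) - g (y + ε • η))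
          = ε⁻¹ • (g (y + ε • cv) - g y) := by module
      rw [hsum] at hz
      push_cast at hz
      calc Fg y = ENNReal.ofReal (a ε (ε⁻¹ • (g (y + ε • cv) - g y))) := by rw [hFg]
        _ ≤ ENNReal.ofReal ((2:ℝ)^(p-1) * (a ε (ε⁻¹ • (g (y + ε • η) - g y)) +
              a ε (ε⁻¹ • (g (y + ε • cv) - g (y + ε • η))))) := ENNReal.ofReal_le_ofReal hz
        _ = _ := by
            rw [ENNReal.ofReal_mul (by positivity),
              ENNReal.ofReal_add (ha_nn ε hε _) (ha_nn ε hε _)]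
    have hswap : ∫⁻ y in T j, ∫⁻ η in Metric.ball (0:Eu d) (r/2),
          (ENNReal.ofReal ((2:ℝ)^(p-1)) *
            (ENNReal.ofReal (a ε (ε⁻¹ • (g (y + ε • η) - g y))) +
             ENNReal.ofReal (a ε (ε⁻¹ • (g (y + ε • cv) - g (y + ε • η))))))
        = ∫⁻ η in Metric.ball (0:Eu d) (r/2), ∫⁻ y in T j,
          (ENNReal.ofReal ((2:ℝ)^(p-1)) *
            (ENNReal.ofReal (a ε (ε⁻¹ • (g (y + ε • η) - g y))) +
             ENNReal.ofReal (a ε (ε⁻¹ • (g (y + ε • cv) - g (y + ε • η)))))) := by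
      refine lintegral_lintegral_swap (Measurable.aemeasurable ?_)
      have hm1 : Measurable (fun pq : Eu d × Eu d => g (pq.1 + ε • pq.2)) :=
        hgm.comp (measurable_fst.add (measurable_snd.const_smul ε))
      have hm0 : Measurable (fun pq : Eu d × Eu d => g pq.1) := hgm.comp measurable_fst
      have hmc : Measurable (fun pq : Eu d × Eu d => g (pq.1 + ε • cv)) :=
        hgm.comp (measurable_fst.add_const (ε • cv))
      exact (((ha_meas.comp ((hm1.sub hm0).const_smul ε⁻¹)).ennreal_ofReal.add
        ((ha_meas.comp ((hmc.sub hm1).const_smul ε⁻¹)).ennreal_ofReal)).const_mul _)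
    have hI1m : Measurable (fun η : Eu d => ∫⁻ y in T j,
        ENNReal.ofReal (a ε (ε⁻¹ • (g (y + ε • η) - g y)))) := by
      refine Measurable.lintegral_prod_right ?_
      exact (ha_meas.comp (((hgm.comp (measurable_snd.add (measurable_fst.const_smul ε))).sub
        (hgm.comp measurable_snd)).const_smul ε⁻¹)).ennreal_ofReal
    have hsplit : ∀ (S : Set (Eu d)) (A B : Eu d → ℝ≥0∞), Measurable A →
        ∫⁻ x in S, (ENNReal.ofReal ((2:ℝ)^(p-1)) * (A x + B x)) =
        ENNReal.ofReal ((2:ℝ)^(p-1)) * ((∫⁻ x in S, A x) + ∫⁻ x in S, B x) := by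
      intro S A B hA
      rw [lintegral_const_mul' _ _ ENNReal.ofReal_ne_top, lintegral_add_left hA]
    have hT1 : ∫⁻ η in Metric.ball (0:Eu d) (r/2), ∫⁻ y in T j,
        ENNReal.ofReal (a ε (ε⁻¹ • (g (y + ε • η) - g y))) ≤ Ag := by
      have hmono : ∀ η ∈ Metric.ball (0:Eu d) (r/2), (∫⁻ y in T j,
          ENNReal.ofReal (a ε (ε⁻¹ • (g (y + ε • η) - g y)))) ≤ Φ η := by
        intro η hη
        rw [hΦ]
        exact lintegral_mono_set fun y hy =>
          hTsub j (Nat.le_of_succ_le hj) η (mem_ball_zero_iff.1 hη) y hy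
      calc ∫⁻ η in Metric.ball (0:Eu d) (r/2), ∫⁻ y in T j,
            ENNReal.ofReal (a ε (ε⁻¹ • (g (y + ε • η) - g y)))
          ≤ ∫⁻ η in Metric.ball (0:Eu d) (r/2), Φ η := lintegral_mono_ae (by
            filter_upwards [ae_restrict_mem measurableSet_ball] with η hη using hmono η hη)
        _ ≤ Ag := by
            rw [hAgdef]
            exact lintegral_mono_set (ball_subset_ball (by linarith))
    have hT2 : ∫⁻ η in Metric.ball (0:Eu d) (r/2), ∫⁻ y in T j,
        ENNReal.ofReal (a ε (ε⁻¹ • (g (y + ε • cv) - g (y + ε • η)))) ≤ Ag := by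
      have hmono : ∀ η ∈ Metric.ball (0:Eu d) (r/2), (∫⁻ y in T j,
          ENNReal.ofReal (a ε (ε⁻¹ • (g (y + ε • cv) - g (y + ε • η))))) ≤ Φ (cv - η) := by
        intro η hη
        have hηn := mem_ball_zero_iff.1 hη
        have hchg : ∫⁻ y in T j, ENNReal.ofReal (a ε (ε⁻¹ • (g (y + ε • cv) - g (y + ε • η))))
            = ∫⁻ x in (fun y => y + ε • η) '' T j,
              ENNReal.ofReal (a ε (ε⁻¹ • (g (x + ε • (cv - η)) - g x))) := by
          rw [← setLIntegral_translate
            (fun x => ENNReal.ofReal (a ε (ε⁻¹ • (g (x + ε • (cv - η)) - g x)))) (ε • η) (T j)]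
          refine lintegral_congr fun y => ?_
          have hpt : y + ε • η + ε • (cv - η) = y + ε • cv := by module
          simp only [hpt]
        rw [hchg, hΦ]
        exact lintegral_mono_set (hTsub2 j hj η hηn)
      calc ∫⁻ η in Metric.ball (0:Eu d) (r/2), ∫⁻ y in T j,
            ENNReal.ofReal (a ε (ε⁻¹ • (g (y + ε • cv) - g (y + ε • η))))
          ≤ ∫⁻ η in Metric.ball (0:Eu d) (r/2), Φ (cv - η) := lintegral_mono_ae (by
            filter_upwards [ae_restrict_mem measurableSet_ball] with η hη using hmono η hη)
        _ = ∫⁻ η' in (fun η : Eu d => cv - η) '' Metric.ball (0:Eu d) (r/2), Φ η' :=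
            setLIntegral_subLeft Φ cv _
        _ ≤ Ag := by
            rw [hAgdef]
            exact lintegral_mono_set hball2
    calc βE * ∫⁻ y in T j, Fg y
        = ∫⁻ y in T j, ∫⁻ _η in Metric.ball (0:Eu d) (r/2), Fg y := h1
      _ ≤ ∫⁻ y in T j, ∫⁻ η in Metric.ball (0:Eu d) (r/2),
            (ENNReal.ofReal ((2:ℝ)^(p-1)) *
              (ENNReal.ofReal (a ε (ε⁻¹ • (g (y + ε • η) - g y))) +
               ENNReal.ofReal (a ε (ε⁻¹ • (g (y + ε • cv) - g (y + ε • η)))))) :=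
          lintegral_mono fun y => lintegral_mono fun η => hptw η y
      _ = ∫⁻ η in Metric.ball (0:Eu d) (r/2), ∫⁻ y in T j,
            (ENNReal.ofReal ((2:ℝ)^(p-1)) *
              (ENNReal.ofReal (a ε (ε⁻¹ • (g (y + ε • η) - g y))) +
               ENNReal.ofReal (a ε (ε⁻¹ • (g (y + ε • cv) - g (y + ε • η)))))) := hswap
      _ = ∫⁻ η in Metric.ball (0:Eu d) (r/2), (ENNReal.ofReal ((2:ℝ)^(p-1)) *
            ((∫⁻ y in T j, ENNReal.ofReal (a ε (ε⁻¹ • (g (y + ε • η) - g y)))) +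
             ∫⁻ y in T j, ENNReal.ofReal (a ε (ε⁻¹ • (g (y + ε • cv) - g (y + ε • η)))))) :=
          lintegral_congr fun η => hsplit (T j) _ _ (hFme (ε • η))
      _ = ENNReal.ofReal ((2:ℝ)^(p-1)) *
            ((∫⁻ η in Metric.ball (0:Eu d) (r/2), ∫⁻ y in T j,
              ENNReal.ofReal (a ε (ε⁻¹ • (g (y + ε • η) - g y)))) +
             ∫⁻ η in Metric.ball (0:Eu d) (r/2), ∫⁻ y in T j,
              ENNReal.ofReal (a ε (ε⁻¹ • (g (y + ε • cv) - g (y + ε • η))))) := by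
          rw [lintegral_const_mul' _ _ ENNReal.ofReal_ne_top, lintegral_add_left hI1m]
      _ ≤ ENNReal.ofReal ((2:ℝ)^(p-1)) * (Ag + Ag) := mul_le_mul_right (add_le_add hT1 hT2) _
      _ = ENNReal.ofReal (2^p) * Ag := by
          rw [← two_mul, ← mul_assoc]
          congr 1
          rw [← ENNReal.ofReal_ofNat 2, ← ENNReal.ofReal_mul (by positivity)]
          congr 1
          rw [← Real.rpow_add_one two_ne_zero (p-1), sub_add_cancel]
  -- telescoping estimate
  have htel : ∀ x : Eu d, a ε (ε⁻¹ • (g (x + ε • ξ) - g x)) ≤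
      (k:ℝ)^(p-1) * ∑ i : Fin k, a ε (ε⁻¹ • (g (q (i.val+1) x) - g (q i.val x))) := by
    intro x
    have h := ha_subadd ε hε k hk1 (fun i : Fin k => ε⁻¹ • (g (q (i.val+1) x) - g (q i.val x)))
    have hsum : (∑ i : Fin k, ε⁻¹ • (g (q (i.val+1) x) - g (q i.val x)))
        = ε⁻¹ • (g (x + ε • ξ) - g x) := by
      rw [← Finset.smul_sum,
        Fin.sum_univ_eq_sum_range (fun j => g (q (j+1) x) - g (q j x)) k,
        Finset.sum_range_sub (fun j => g (q j x)) k, hqk x, hq0 x]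
    rwa [hsum] at h
  -- replace v with g on both sides
  have hVW' : ∀ x ∈ V, x ∈ W := fun x hx => hVW hx
  have hVW'' : ∀ x ∈ V, x + ε • ξ ∈ W := by
    intro x hx
    apply hUW
    have h := hmemU ε (le_of_lt hε) le_rfl 0 (by rw [norm_zero]; positivity) x hx
    simpa using h
  have hLHSg : ∫⁻ x in V, ENNReal.ofReal (a ε (ε⁻¹ • (v (x + ε • ξ) - v x))) =
      ∫⁻ x in V, ENNReal.ofReal (a ε (ε⁻¹ • (g (x + ε • ξ) - g x))) :=
    hrep V hVopen.measurableSet (ε • ξ) hVW' hVW''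
  have hshiftmeas : ∀ η : Eu d, MeasurableSet (shiftSet U ε η) := by
    intro η
    have hopen : IsOpen (shiftSet U ε η) := by
      have hsep : shiftSet U ε η = U ∩ (fun x => x + ε • η) ⁻¹' U := rfl
      rw [hsep]
      exact hUopen.inter (hUopen.preimage (continuous_id.add continuous_const))
    exact hopen.measurableSet
  have hAfun_v : Afun a ε r v U = Ag := by
    rw [hAgdef]
    refine lintegral_congr fun η => ?_
    exact hrep (shiftSet U ε η) (hshiftmeas η) (ε • η)
      (fun x hx => hUW hx.1) (fun x hx => hUW hx.2)
  -- per-term change of variables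
  have hmeasz : ∀ j : ℕ, Measurable
      (fun x : Eu d => ENNReal.ofReal (a ε (ε⁻¹ • (g (q (j+1) x) - g (q j x))))) := by
    intro j
    simp only [hq]
    exact (ha_meas.comp (((hg.measurable.comp (measurable_add_const _)).sub
      (hg.measurable.comp (measurable_add_const _))).const_smul ε⁻¹)).ennreal_ofReal
  have httrans : ∀ j : ℕ,
      ∫⁻ x in V, ENNReal.ofReal (a ε (ε⁻¹ • (g (q (j+1) x) - g (q j x)))) =
      ∫⁻ y in T j, Fg y := by
    intro j
    have h1 : ∀ x : Eu d, ENNReal.ofReal (a ε (ε⁻¹ • (g (q (j+1) x) - g (q j x)))) =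
        Fg (q j x) := by
      intro x
      rw [hFg]
      simp only
      rw [hqstep j x]
    calc ∫⁻ x in V, ENNReal.ofReal (a ε (ε⁻¹ • (g (q (j+1) x) - g (q j x))))
        = ∫⁻ x in V, Fg (q j x) := lintegral_congr fun x => h1 x
      _ = ∫⁻ y in T j, Fg y := by
          rw [hT]
          simp only [hq]
          exact setLIntegral_translate Fg _ V
  -- assembling the main estimate for g
  have hfinal : ∫⁻ x in V, ENNReal.ofReal (a ε (ε⁻¹ • (g (x + ε • ξ) - g x))) ≤
      ENNReal.ofReal ((k:ℝ)^(p-1)) * ((k : ℝ≥0∞) * (ENNReal.ofReal (2^p) * Ag / βE)) := by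
    calc ∫⁻ x in V, ENNReal.ofReal (a ε (ε⁻¹ • (g (x + ε • ξ) - g x)))
        ≤ ∫⁻ x in V, ENNReal.ofReal ((k:ℝ)^(p-1) *
            ∑ i : Fin k, a ε (ε⁻¹ • (g (q (i.val+1) x) - g (q i.val x)))) :=
          lintegral_mono fun x => ENNReal.ofReal_le_ofReal (htel x)
      _ = ∫⁻ x in V, ENNReal.ofReal ((k:ℝ)^(p-1)) *
            ∑ i : Fin k, ENNReal.ofReal (a ε (ε⁻¹ • (g (q (i.val+1) x) - g (q i.val x)))) :=
          lintegral_congr fun x => by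
            rw [ENNReal.ofReal_mul (by positivity),
              ENNReal.ofReal_sum_of_nonneg (fun i _ => ha_nn ε hε _)]
      _ = ENNReal.ofReal ((k:ℝ)^(p-1)) *
            ∑ i : Fin k, ∫⁻ x in V, ENNReal.ofReal (a ε (ε⁻¹ • (g (q (i.val+1) x) - g (q i.val x)))) := by
          rw [lintegral_const_mul' _ _ ENNReal.ofReal_ne_top,
            lintegral_finset_sum' Finset.univ (fun i _ => (hmeasz i.val).aemeasurable)]
      _ ≤ ENNReal.ofReal ((k:ℝ)^(p-1)) * ∑ _i : Fin k, (ENNReal.ofReal (2^p) * Ag / βE) := by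
          gcongr with i _
          rw [httrans i.val]
          exact hstep i.val i.isLt
      _ = ENNReal.ofReal ((k:ℝ)^(p-1)) * ((k : ℝ≥0∞) * (ENNReal.ofReal (2^p) * Ag / βE)) := by
          rw [Finset.sum_const, Finset.card_univ, Fintype.card_fin, nsmul_eq_mul]
  -- the constant estimate
  have hkle : (k:ℝ) ≤ (2/r+1) * (‖ξ‖+1) := by
    have h1 : (k:ℝ) = (⌊2*‖ξ‖/r⌋₊:ℝ) + 1 := by rw [hkdef]; push_cast; ring
    have h2 : (⌊2*‖ξ‖/r⌋₊:ℝ) ≤ 2*‖ξ‖/r := Nat.floor_le (by positivity)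
    have h3 : (2/r+1)*(‖ξ‖+1) = 2*‖ξ‖/r + (2/r + ‖ξ‖ + 1) := by ring
    have h4 : (0:ℝ) ≤ 2/r + ‖ξ‖ := by positivity
    rw [h1, h3]
    linarith
  have hxi2 : (‖ξ‖+1)^p ≤ 2^p * (‖ξ‖^p + 1) := by
    rcases le_total ‖ξ‖ 1 with h | h
    · have h1 : (‖ξ‖+1)^p ≤ (2:ℝ)^p :=
        Real.rpow_le_rpow (by positivity) (by linarith) hp0
      nlinarith [Real.rpow_nonneg (by norm_num : (0:ℝ) ≤ 2) p,
        Real.rpow_nonneg (norm_nonneg ξ) p]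
    · have h1 : (‖ξ‖+1)^p ≤ (2*‖ξ‖)^p :=
        Real.rpow_le_rpow (by positivity) (by linarith) hp0
      have h2 : (2*‖ξ‖)^p = 2^p * ‖ξ‖^p := Real.mul_rpow (by norm_num) (norm_nonneg ξ)
      nlinarith [Real.rpow_nonneg (by norm_num : (0:ℝ) ≤ 2) p]
  have hkp : (k:ℝ)^p ≤ (2*(2/r+1))^p * (‖ξ‖^p + 1) := by
    have h1 : (k:ℝ)^p ≤ ((2/r+1)*(‖ξ‖+1))^p :=
      Real.rpow_le_rpow (by positivity) hkle hp0
    have h2 : ((2/r+1)*(‖ξ‖+1))^p = (2/r+1)^p * (‖ξ‖+1)^p :=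
      Real.mul_rpow (by positivity) (by positivity)
    have h3 : (2*(2/r+1))^p = 2^p * (2/r+1)^p := Real.mul_rpow (by norm_num) (by positivity)
    calc (k:ℝ)^p ≤ (2/r+1)^p * (‖ξ‖+1)^p := h1.trans_eq h2
      _ ≤ (2/r+1)^p * (2^p * (‖ξ‖^p+1)) :=
          mul_le_mul_of_nonneg_left hxi2 (Real.rpow_nonneg (by positivity) p)
      _ = (2*(2/r+1))^p * (‖ξ‖^p+1) := by rw [h3]; ring
  have hXle : ENNReal.ofReal ((k:ℝ)^(p-1)) * (k : ℝ≥0∞) * ENNReal.ofReal (2^p) * βE⁻¹ ≤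
      ENNReal.ofReal ((2*(2/r+1))^p * 2^p / βr * (‖ξ‖^p + 1)) := by
    have h1 : ENNReal.ofReal ((k:ℝ)^(p-1)) * (k : ℝ≥0∞) * ENNReal.ofReal (2^p) =
        ENNReal.ofReal ((k:ℝ)^p * 2^p) := by
      rw [← ENNReal.ofReal_natCast k, ← ENNReal.ofReal_mul (by positivity),
        ← ENNReal.ofReal_mul (by positivity)]
      congr 1
      rw [← Real.rpow_add_one (ne_of_gt hkR) (p-1), sub_add_cancel]
    rw [h1]
    have h2 : βE⁻¹ = (ENNReal.ofReal βr)⁻¹ := by rw [hβr, ENNReal.ofReal_toReal hβtop]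
    rw [h2, ← div_eq_mul_inv, ← ENNReal.ofReal_div_of_pos hβrpos]
    apply ENNReal.ofReal_le_ofReal
    have h4 : (2*(2/r+1))^p * 2^p / βr * (‖ξ‖^p + 1) =
        ((2*(2/r+1))^p * (‖ξ‖^p+1) * 2^p)/βr := by ring
    rw [h4]
    gcongr
  calc ∫⁻ x in V, ENNReal.ofReal (a ε (ε⁻¹ • (v (x + ε • ξ) - v x)))
      = ∫⁻ x in V, ENNReal.ofReal (a ε (ε⁻¹ • (g (x + ε • ξ) - g x))) := hLHSg
    _ ≤ ENNReal.ofReal ((k:ℝ)^(p-1)) * ((k : ℝ≥0∞) * (ENNReal.ofReal (2^p) * Ag / βE)) := hfinal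
    _ = (ENNReal.ofReal ((k:ℝ)^(p-1)) * (k : ℝ≥0∞) * ENNReal.ofReal (2^p) * βE⁻¹) * Ag := by
        rw [div_eq_mul_inv]; ring
    _ ≤ ENNReal.ofReal ((2*(2/r+1))^p * 2^p / βr * (‖ξ‖^p + 1)) * Ag :=
        mul_le_mul_left hXle _
    _ = ENNReal.ofReal ((2*(2/r+1))^p * 2^p / βr * (‖ξ‖^p + 1)) * Afun a ε r v U := by
        rw [hAfun_v]
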